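/- arXiv:1905.00952 — 7 statements merged into one kernel-verified Lean document; each statement's English description precedes it below -/
import Mathlib

section
/- (Theorem 'Deltacocycle', part 2) In the algebraic skeleton of a lax BV-BFV theory, the variational differential of the BV-BFV difference equals the descent differential of the one-form: δ(L − ι_Q θ) = L_Q θ − d θ, i.e. δΔ = (L_Q − d)θ. In particular, θ satisfies the descent equation (L_Q − d)θ = 0 if and only if Δ is δ-closed. -/
/-- **Theorem `Deltacocycle`, part 2.**  In the algebraic skeleton of a lax BV-BFV theory,
the variational differential of the BV-BFV difference `Δ = L - ι_Q θ` equals the descent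
differential of the one-form: `δΔ = (L_Q - d)θ`, where on one-forms
`L_Q = ι_Q ∘ δ - δ ∘ ι_Q`.  In particular `(L_Q - d)θ = 0` iff `δΔ = 0`. -/
theorem stmt0
    {Ω0 Ω1 Ω2 : Type*}
    [AddCommGroup Ω0] [Module ℝ Ω0]
    [AddCommGroup Ω1] [Module ℝ Ω1]
    [AddCommGroup Ω2] [Module ℝ Ω2]
    -- the variational differential δ
    (δ0 : Ω0 →ₗ[ℝ] Ω1) (δ1 : Ω1 →ₗ[ℝ] Ω2)
    (hδδ : δ1 ∘ₗ δ0 = 0)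
    -- the horizontal differential d
    (d0 : Ω0 →ₗ[ℝ] Ω0) (d1 : Ω1 →ₗ[ℝ] Ω1) (d2 : Ω2 →ₗ[ℝ] Ω2)
    (hdd0 : d0 ∘ₗ d0 = 0) (hdd1 : d1 ∘ₗ d1 = 0) (hdd2 : d2 ∘ₗ d2 = 0)
    (hδd0 : δ0 ∘ₗ d0 = -(d1 ∘ₗ δ0)) (hδd1 : δ1 ∘ₗ d1 = -(d2 ∘ₗ δ1))
    -- the contraction ι_Q
    (ιQ1 : Ω1 →ₗ[ℝ] Ω0) (ιQ2 : Ω2 →ₗ[ℝ] Ω1)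
    (hιd1 : ιQ1 ∘ₗ d1 = d0 ∘ₗ ιQ1) (hιd2 : ιQ2 ∘ₗ d2 = d1 ∘ₗ ιQ2)
    -- the lax BV-BFV structure (L, θ), with ϖ := δθ
    (L : Ω0) (θ : Ω1)
    (hmaster1 : ιQ2 (δ1 θ) = δ0 L + d1 θ)
    (hmaster2 : ιQ1 (ιQ2 (δ1 θ)) = (2 : ℝ) • d0 L) :
    -- δΔ = (L_Q - d)θ, with Δ := L - ι_Q θ and L_Q θ := ι_Q δθ - δ ι_Q θ
    δ0 (L - ιQ1 θ) = (ιQ2 (δ1 θ) - δ0 (ιQ1 θ)) - d1 θ ∧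
    -- in particular θ is a descent cocycle iff Δ is δ-closed
    ((ιQ2 (δ1 θ) - δ0 (ιQ1 θ)) - d1 θ = 0 ↔ δ0 (L - ιQ1 θ) = 0) := by
  have h : δ0 (L - ιQ1 θ) = (ιQ2 (δ1 θ) - δ0 (ιQ1 θ)) - d1 θ := by
    rw [map_sub, eq_sub_iff_add_eq.mpr hmaster1.symm]
    abel
  exact ⟨h, by rw [h]⟩
end

section
/- (Theorem 'Deltacocycle', part 1) Suppose in addition that Ω⁰ carries a ℤ-grading Ω⁰ = ⊕ₙ Ω⁰ₙ such that both L_Q and d map Ω⁰ₙ into Ω⁰ₙ₊₁, that the BV-BFV difference Δ lies in ⊕_{n≥0} Ω⁰ₙ, that δ is injective on ⊕_{n≥1} Ω⁰ₙ (there are no nonzero-degree δ-constants), and that L_Q ∘ L_Q = 0 on Ω¹ (reflecting [Q,Q] = 0). Then Δ satisfies the descent equations: (L_Q − d)Δ = 0. -/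
/-- **Theorem `Deltacocycle`, part 1.**  In the algebraic skeleton of a lax BV-BFV theory,
assume additionally that `Ω⁰` carries an internal (ghost-number) ℤ-grading by submodules
`Gr n` such that both `L_Q = ι_Q ∘ δ` and `d` map `Gr n` into `Gr (n+1)`, that the BV-BFV
difference `Δ := L - ι_Q θ` lies in the nonnegative-degree part `⨆ (n ≥ 0), Gr n`, that `δ`
is injective on the positive-degree part `⨆ (n ≥ 1), Gr n` (no nonzero-degree δ-constants),
and that `L_Q ∘ L_Q = 0` on `Ω¹` (reflecting `[Q,Q] = 0`).  Then `Δ` satisfies the descent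
equations: `(L_Q - d)Δ = 0`. -/
theorem stmt1
    {Ω0 Ω1 Ω2 : Type*}
    [AddCommGroup Ω0] [Module ℝ Ω0]
    [AddCommGroup Ω1] [Module ℝ Ω1]
    [AddCommGroup Ω2] [Module ℝ Ω2]
    -- the variational differential δ
    (δ0 : Ω0 →ₗ[ℝ] Ω1) (δ1 : Ω1 →ₗ[ℝ] Ω2)
    (hδδ : δ1 ∘ₗ δ0 = 0)
    -- the horizontal differential d
    (d0 : Ω0 →ₗ[ℝ] Ω0) (d1 : Ω1 →ₗ[ℝ] Ω1) (d2 : Ω2 →ₗ[ℝ] Ω2)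
    (hdd0 : d0 ∘ₗ d0 = 0) (hdd1 : d1 ∘ₗ d1 = 0) (hdd2 : d2 ∘ₗ d2 = 0)
    (hδd0 : δ0 ∘ₗ d0 = -(d1 ∘ₗ δ0)) (hδd1 : δ1 ∘ₗ d1 = -(d2 ∘ₗ δ1))
    -- the contraction ι_Q
    (ιQ1 : Ω1 →ₗ[ℝ] Ω0) (ιQ2 : Ω2 →ₗ[ℝ] Ω1)
    (hιd1 : ιQ1 ∘ₗ d1 = d0 ∘ₗ ιQ1) (hιd2 : ιQ2 ∘ₗ d2 = d1 ∘ₗ ιQ2)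
    -- the lax BV-BFV structure (L, θ), with ϖ := δθ
    (L : Ω0) (θ : Ω1)
    (hmaster1 : ιQ2 (δ1 θ) = δ0 L + d1 θ)
    (hmaster2 : ιQ1 (ιQ2 (δ1 θ)) = (2 : ℝ) • d0 L)
    -- the ℤ-grading (ghost number) of Ω⁰
    (Gr : ℤ → Submodule ℝ Ω0)
    (hinternal : DirectSum.IsInternal Gr)
    -- L_Q = ι_Q ∘ δ and d raise the degree by one
    (hLQgr : ∀ n : ℤ, ∀ x ∈ Gr n, ιQ1 (δ0 x) ∈ Gr (n + 1))
    (hdgr : ∀ n : ℤ, ∀ x ∈ Gr n, d0 x ∈ Gr (n + 1))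
    -- Δ has nonnegative degrees only
    (hΔnonneg : L - ιQ1 θ ∈ ⨆ (n : ℤ) (_ : 0 ≤ n), Gr n)
    -- there are no nonzero-degree δ-constants
    (hδinj : ∀ x ∈ ⨆ (n : ℤ) (_ : 1 ≤ n), Gr n, δ0 x = 0 → x = 0)
    -- L_Q ∘ L_Q = 0 on Ω¹, where L_Q ω = ι_Q δω - δ ι_Q ω
    (hLQLQ1 : ∀ ω : Ω1,
      ιQ2 (δ1 (ιQ2 (δ1 ω) - δ0 (ιQ1 ω))) - δ0 (ιQ1 (ιQ2 (δ1 ω) - δ0 (ιQ1 ω))) = 0) :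
    -- Δ satisfies the descent equations: (L_Q - d)Δ = 0
    ιQ1 (δ0 (L - ιQ1 θ)) - d0 (L - ιQ1 θ) = 0 := by
  -- pointwise versions of the compositional hypotheses
  have hδδ' : ∀ x, δ1 (δ0 x) = 0 := fun x => by
    simpa using LinearMap.ext_iff.mp hδδ x
  have hdd0' : ∀ x, d0 (d0 x) = 0 := fun x => by
    simpa using LinearMap.ext_iff.mp hdd0 x
  have hdd1' : ∀ x, d1 (d1 x) = 0 := fun x => by
    simpa using LinearMap.ext_iff.mp hdd1 x
  have hδd0' : ∀ x, δ0 (d0 x) = -(d1 (δ0 x)) := fun x => by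
    simpa using LinearMap.ext_iff.mp hδd0 x
  have hδd1' : ∀ x, δ1 (d1 x) = -(d2 (δ1 x)) := fun x => by
    simpa using LinearMap.ext_iff.mp hδd1 x
  have hιd1' : ∀ x, ιQ1 (d1 x) = d0 (ιQ1 x) := fun x => by
    simpa using LinearMap.ext_iff.mp hιd1 x
  have hιd2' : ∀ x, ιQ2 (d2 x) = d1 (ιQ2 x) := fun x => by
    simpa using LinearMap.ext_iff.mp hιd2 x
  -- x simplifies to d0 L - ιQ1 (δ0 (ιQ1 θ))
  have hx : ιQ1 (δ0 (L - ιQ1 θ)) - d0 (L - ιQ1 θ)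
      = d0 L - ιQ1 (δ0 (ιQ1 θ)) := by
    have h1 : ιQ1 (δ0 L) = (2 : ℝ) • d0 L - d0 (ιQ1 θ) := by
      have : ιQ1 (ιQ2 (δ1 θ)) = ιQ1 (δ0 L) + ιQ1 (d1 θ) := by
        rw [hmaster1, map_add]
      rw [hmaster2, hιd1'] at this
      exact eq_sub_of_add_eq this.symm
    rw [map_sub, map_sub, map_sub, h1]
    module
  -- key: δ0 applied to x vanishes
  have hδx : δ0 (ιQ1 (δ0 (L - ιQ1 θ)) - d0 (L - ιQ1 θ)) = 0 := by
    rw [hx]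
    have hkey := hLQLQ1 θ
    rw [map_sub, map_sub, map_sub, map_sub] at hkey
    -- δ1 (δ0 (ιQ1 θ)) = 0
    rw [hδδ'] at hkey
    -- δ1 (ιQ2 (δ1 θ)) = - d2 (δ1 θ)
    have e1 : δ1 (ιQ2 (δ1 θ)) = -(d2 (δ1 θ)) := by
      rw [hmaster1, map_add, hδδ', hδd1']; abel
    rw [e1, map_neg, map_zero, hιd2', hmaster2, map_smul] at hkey
    -- now hkey : -(d1 (ιQ2 (δ1 θ))) ... rearrange
    have e2 : δ0 (ιQ1 (δ0 (ιQ1 θ))) = -(d1 (δ0 L)) := by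
      have e3 : d1 (ιQ2 (δ1 θ)) = d1 (δ0 L) := by
        rw [hmaster1, map_add, hdd1']; abel
      have e4 : δ0 (d0 L) = -(d1 (δ0 L)) := hδd0' L
      rw [e3, e4] at hkey
      linear_combination (norm := module) hkey
    rw [map_sub, e2, hδd0']
    abel
  -- x lies in the positive-degree part
  have hmem : ιQ1 (δ0 (L - ιQ1 θ)) - d0 (L - ιQ1 θ)
      ∈ ⨆ (n : ℤ) (_ : 1 ≤ n), Gr n := by
    have hle : (⨆ (n : ℤ) (_ : 0 ≤ n), Gr n) ≤
        Submodule.comap (ιQ1 ∘ₗ δ0 - d0) (⨆ (n : ℤ) (_ : 1 ≤ n), Gr n) := by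
      refine iSup₂_le fun n hn => fun x hx => ?_
      simp only [Submodule.mem_comap, LinearMap.sub_apply, LinearMap.comp_apply]
      have : ιQ1 (δ0 x) - d0 x ∈ Gr (n + 1) :=
        Submodule.sub_mem _ (hLQgr n x hx) (hdgr n x hx)
      exact Submodule.mem_iSup_of_mem (n + 1)
        (Submodule.mem_iSup_of_mem (by omega) this)
    have := hle hΔnonneg
    simpa using this
  exact hδinj _ hmem hδx
end

section
/- (Theorem 'Deltacocycle', part 4) Suppose in addition that the BV-BFV difference satisfies the descent equations (L_Q − d)Δ = 0, and let E : Ω⁰ → Ω⁰ be a linear map (the graded Euler operator) with L_Q ∘ E = E ∘ L_Q − L_Q and d ∘ E = E ∘ d. Then the total Lagrangian 𝕃 := L + EΔ satisfies the descent equations: L_Q 𝕃 = d 𝕃, i.e. (L_Q − d)𝕃 = 0. -/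
/-- **Theorem `Deltacocycle`, part 4.**  In the algebraic skeleton of a lax BV-BFV theory,
assume the BV-BFV difference `Δ := L - ι_Q θ` satisfies the descent equations
`(L_Q - d)Δ = 0`, and let `E` (the graded Euler operator) be a linear map on `Ω⁰` with
`L_Q ∘ E = E ∘ L_Q - L_Q` and `d ∘ E = E ∘ d`.  Then the total Lagrangian `𝕃 := L + EΔ`
satisfies the descent equations: `L_Q 𝕃 = d 𝕃`. -/
theorem stmt2
    {Ω0 Ω1 Ω2 : Type*}
    [AddCommGroup Ω0] [Module ℝ Ω0]
    [AddCommGroup Ω1] [Module ℝ Ω1]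
    [AddCommGroup Ω2] [Module ℝ Ω2]
    -- the variational differential δ
    (δ0 : Ω0 →ₗ[ℝ] Ω1) (δ1 : Ω1 →ₗ[ℝ] Ω2)
    (hδδ : δ1 ∘ₗ δ0 = 0)
    -- the horizontal differential d
    (d0 : Ω0 →ₗ[ℝ] Ω0) (d1 : Ω1 →ₗ[ℝ] Ω1) (d2 : Ω2 →ₗ[ℝ] Ω2)
    (hdd0 : d0 ∘ₗ d0 = 0) (hdd1 : d1 ∘ₗ d1 = 0) (hdd2 : d2 ∘ₗ d2 = 0)
    (hδd0 : δ0 ∘ₗ d0 = -(d1 ∘ₗ δ0)) (hδd1 : δ1 ∘ₗ d1 = -(d2 ∘ₗ δ1))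
    -- the contraction ι_Q
    (ιQ1 : Ω1 →ₗ[ℝ] Ω0) (ιQ2 : Ω2 →ₗ[ℝ] Ω1)
    (hιd1 : ιQ1 ∘ₗ d1 = d0 ∘ₗ ιQ1) (hιd2 : ιQ2 ∘ₗ d2 = d1 ∘ₗ ιQ2)
    -- the lax BV-BFV structure (L, θ)
    (L : Ω0) (θ : Ω1)
    (hmaster1 : ιQ2 (δ1 θ) = δ0 L + d1 θ)
    (hmaster2 : ιQ1 (ιQ2 (δ1 θ)) = (2 : ℝ) • d0 L)
    -- the graded Euler operator E, with L_Q = ι_Q ∘ δ on Ω⁰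
    (E : Ω0 →ₗ[ℝ] Ω0)
    (hELQ : (ιQ1 ∘ₗ δ0) ∘ₗ E = E ∘ₗ (ιQ1 ∘ₗ δ0) - ιQ1 ∘ₗ δ0)
    (hEd : d0 ∘ₗ E = E ∘ₗ d0)
    -- Δ := L - ι_Q θ satisfies the descent equations
    (hΔdescent : ιQ1 (δ0 (L - ιQ1 θ)) = d0 (L - ιQ1 θ)) :
    -- the total Lagrangian 𝕃 := L + EΔ satisfies the descent equations
    ιQ1 (δ0 (L + E (L - ιQ1 θ))) = d0 (L + E (L - ιQ1 θ)) := by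
  have hid : ιQ1 (d1 θ) = d0 (ιQ1 θ) := congrFun (congrArg DFunLike.coe hιd1) θ
  have h1 : ιQ1 (δ0 L) = d0 L + d0 (L - ιQ1 θ) := by
    have := congrArg ιQ1 hmaster1
    rw [hmaster2, map_add, hid] at this
    have h2 : ((2:ℝ) • d0 L) = ιQ1 (δ0 L) + d0 (ιQ1 θ) := this
    rw [two_smul] at h2
    rw [map_sub, eq_sub_of_add_eq h2.symm]
    abel
  have hE : ιQ1 (δ0 (E (L - ιQ1 θ)))
      = E (ιQ1 (δ0 (L - ιQ1 θ))) - ιQ1 (δ0 (L - ιQ1 θ)) :=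
    congrFun (congrArg DFunLike.coe hELQ) (L - ιQ1 θ)
  have hEd' : d0 (E (L - ιQ1 θ)) = E (d0 (L - ιQ1 θ)) :=
    congrFun (congrArg DFunLike.coe hEd) (L - ιQ1 θ)
  rw [map_add, map_add, hE, hΔdescent, ← hEd', h1, map_add]
  abel
end

section
/- (Lemma 'otherrelations', modified classical master equation) In the algebraic skeleton of a lax BV-BFV theory, the Lie derivative of the Lagrangian along Q is horizontally exact: L_Q L = d(2L − ι_Q θ) = d L_CMR, where L_CMR := 2L − ι_Q θ is the modified Lagrangian; equivalently L_Q L = d(L + Δ). -/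
/-- **Lemma `otherrelations`, modified classical master equation.**  In the algebraic
skeleton of a lax BV-BFV theory, the Lie derivative of the Lagrangian along `Q` is
horizontally exact: `L_Q L = d(2L - ι_Q θ) = d L_CMR`, where `L_CMR := 2L - ι_Q θ` is the
modified Lagrangian; equivalently `L_Q L = d(L + Δ)` with `Δ := L - ι_Q θ`. -/
theorem stmt3
    {Ω0 Ω1 Ω2 : Type*}
    [AddCommGroup Ω0] [Module ℝ Ω0]
    [AddCommGroup Ω1] [Module ℝ Ω1]
    [AddCommGroup Ω2] [Module ℝ Ω2]
    -- the variational differential δ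
    (δ0 : Ω0 →ₗ[ℝ] Ω1) (δ1 : Ω1 →ₗ[ℝ] Ω2)
    (hδδ : δ1 ∘ₗ δ0 = 0)
    -- the horizontal differential d
    (d0 : Ω0 →ₗ[ℝ] Ω0) (d1 : Ω1 →ₗ[ℝ] Ω1) (d2 : Ω2 →ₗ[ℝ] Ω2)
    (hdd0 : d0 ∘ₗ d0 = 0) (hdd1 : d1 ∘ₗ d1 = 0) (hdd2 : d2 ∘ₗ d2 = 0)
    (hδd0 : δ0 ∘ₗ d0 = -(d1 ∘ₗ δ0)) (hδd1 : δ1 ∘ₗ d1 = -(d2 ∘ₗ δ1))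
    -- the contraction ι_Q
    (ιQ1 : Ω1 →ₗ[ℝ] Ω0) (ιQ2 : Ω2 →ₗ[ℝ] Ω1)
    (hιd1 : ιQ1 ∘ₗ d1 = d0 ∘ₗ ιQ1) (hιd2 : ιQ2 ∘ₗ d2 = d1 ∘ₗ ιQ2)
    -- the lax BV-BFV structure (L, θ), with ϖ := δθ
    (L : Ω0) (θ : Ω1)
    (hmaster1 : ιQ2 (δ1 θ) = δ0 L + d1 θ)
    (hmaster2 : ιQ1 (ιQ2 (δ1 θ)) = (2 : ℝ) • d0 L) :
    -- L_Q L = d L_CMR, with L_Q = ι_Q ∘ δ on Ω⁰ and L_CMR := 2L - ι_Q θ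
    ιQ1 (δ0 L) = d0 ((2 : ℝ) • L - ιQ1 θ) ∧
    -- equivalently, L_Q L = d(L + Δ) with Δ := L - ι_Q θ
    ιQ1 (δ0 L) = d0 (L + (L - ιQ1 θ)) := by
  have h := congrArg ιQ1 hmaster1
  have hd : ιQ1 (d1 θ) = d0 (ιQ1 θ) := LinearMap.congr_fun hιd1 θ
  rw [map_add, hd, hmaster2] at h
  have key : ιQ1 (δ0 L) = (2 : ℝ) • d0 L - d0 (ιQ1 θ) := by
    rw [eq_sub_iff_add_eq, ← h]
  constructor
  · rw [key, map_sub, map_smul]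
  · rw [key, map_add, map_sub, two_smul]
    abel
end

section
/- (Lemma 'ELtransverse', matrix/chart version) Let γ : ℝ × E → 𝔄 be continuous and differentiable in the E-variable, and let g : ℝ × E → 𝔄 be twice continuously differentiable with g(t,x) invertible for all (t,x) and ∂_t g(t,x) = g(t,x)·γ(t,x). Then for every one-form A : E → (E →L[ℝ] 𝔄), every (t,x) ∈ ℝ × E and every v ∈ E, the function t ↦ A^{g_t}(x)v is differentiable and ∂_t(A^{g_t}(x)v) = (D_x γ(t,·))(x)v + [A^{g_t}(x)v, γ(t,x)]; that is, (d/dt) A^{g_t} = d_{A^{g_t}} γ_t. -/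
/-!
Write `A^{g_s}(x)v = g_s⁻¹ (A(x)v · g_s + D_x g_s(x)v)`. The flow equation gives `∂ₜ g = g γ` and
`∂ₜ g⁻¹ = -γ g⁻¹`, and by symmetry of the second derivative of the `C²` map `g`,
`∂ₜ D_x g = D_x (g γ) = g D_xγ + (D_x g) γ`. The product rule then yields
`-γ A^g + A^g γ + g⁻¹ g D_xγ`, and `g⁻¹ g = 1`. Since `𝔄` need not be complete, the derivative of
`s ↦ g_s⁻¹` is computed by hand from `a⁻¹ - b⁻¹ = a⁻¹ (b - a) b⁻¹`.
-/

/-- The gauge transform `A^{g_t}(x)v = g⁻¹ (A(x)v) g + g⁻¹ (D_x g_t)(x)v` of a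
`𝔤`-valued one-form `A` on a chart `E` by a time-dependent group-valued map `g`. -/
noncomputable def gaugeTransform {𝔄 E : Type*} [NormedRing 𝔄] [NormedAlgebra ℝ 𝔄]
    [NormedAddCommGroup E] [NormedSpace ℝ E]
    (g : ℝ × E → 𝔄) (A : E → (E →L[ℝ] 𝔄)) (t : ℝ) (x : E) (v : E) : 𝔄 :=
  Ring.inverse (g (t, x)) * (A x v) * g (t, x)
    + Ring.inverse (g (t, x)) * (fderiv ℝ (fun y => g (t, y)) x v)

open Filter Topology

section RingInverse

variable {𝔄 : Type*} [NormedRing 𝔄]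

theorem ContinuousAt.ringInverse_of_isUnit {X : Type*} [TopologicalSpace X] {G : X → 𝔄} {t : X}
    (hG : ContinuousAt G t) (hu : ∀ s, IsUnit (G s)) :
    ContinuousAt (fun s => Ring.inverse (G s)) t := by
  set u := fun s => Ring.inverse (G s)
  have hdiff : ∀ s, u s - u t = u s * (G t - G s) * u t := fun s =>
    Ring.inverse_sub_inverse (iff_of_true (hu s) (hu t))
  have hGt : Tendsto (fun s => ‖G s - G t‖) (𝓝 t) (𝓝 0) :=
    tendsto_iff_norm_sub_tendsto_zero.mp hG
  -- Close to `t`, `‖u s‖ ≤ ‖u t‖ + ‖u s‖ / 2`, so the inverses stay bounded.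
  have hbound : ∀ᶠ s in 𝓝 t, ‖u s - u t‖ ≤ 2 * ‖u t‖ ^ 2 * ‖G s - G t‖ := by
    have hsmall := (by simpa using hGt.mul_const ‖u t‖ :
      Tendsto (fun s => ‖G s - G t‖ * ‖u t‖) (𝓝 t) (𝓝 0)).eventually_le_const one_half_pos
    filter_upwards [hsmall] with s hs
    have hest : ‖u s - u t‖ ≤ ‖u s‖ * ‖G s - G t‖ * ‖u t‖ := by
      rw [hdiff s, norm_sub_rev (G s)]
      exact (norm_mul_le _ _).trans (mul_le_mul_of_nonneg_right (norm_mul_le _ _) (norm_nonneg _))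
    have hus : ‖u s‖ ≤ 2 * ‖u t‖ := by
      have := norm_sub_norm_le (u s) (u t)
      nlinarith [norm_nonneg (u s)]
    calc ‖u s - u t‖ ≤ ‖u s‖ * ‖G s - G t‖ * ‖u t‖ := hest
      _ ≤ 2 * ‖u t‖ * ‖G s - G t‖ * ‖u t‖ := by gcongr
      _ = 2 * ‖u t‖ ^ 2 * ‖G s - G t‖ := by ring
  rw [ContinuousAt, tendsto_iff_norm_sub_tendsto_zero]
  refine squeeze_zero' (Eventually.of_forall fun s => norm_nonneg _) hbound ?_
  simpa using hGt.const_mul (2 * ‖u t‖ ^ 2)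

theorem HasDerivAt.ringInverse_of_isUnit {𝕜 : Type*} [NontriviallyNormedField 𝕜]
    [NormedAlgebra 𝕜 𝔄] {G : 𝕜 → 𝔄} {G' : 𝔄} {t : 𝕜}
    (hG : HasDerivAt G G' t) (hu : ∀ s, IsUnit (G s)) :
    HasDerivAt (fun s => Ring.inverse (G s))
      (-(Ring.inverse (G t) * G' * Ring.inverse (G t))) t := by
  set u := fun s => Ring.inverse (G s)
  have hslope : slope u t = fun s => u s * -slope G t s * u t := by
    funext s
    rw [slope_def_module, slope_def_module, Ring.inverse_sub_inverse (iff_of_true (hu s) (hu t)),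
      ← smul_neg, neg_sub, mul_smul_comm, smul_mul_assoc]
  rw [hasDerivAt_iff_tendsto_slope, hslope]
  have hucont := (hG.continuousAt.ringInverse_of_isUnit hu).tendsto
  convert ((hucont.mono_left nhdsWithin_le_nhds).mul
    (hasDerivAt_iff_tendsto_slope.mp hG).neg).mul_const (u t) using 2
  noncomm_ring

end RingInverse

section MixedPartials

variable {E F : Type*} [NormedAddCommGroup E] [NormedSpace ℝ E]
  [NormedAddCommGroup F] [NormedSpace ℝ F] {f : ℝ × E → F} {f' : ℝ × E →L[ℝ] F} {t : ℝ} {x : E}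

theorem HasFDerivAt.hasDerivAt_fst (hf : HasFDerivAt f f' (t, x)) :
    HasDerivAt (fun s => f (s, x)) (f' (1, 0)) t :=
  hf.comp_hasDerivAt t ((hasDerivAt_id t).prodMk (hasDerivAt_const t x))

theorem HasFDerivAt.hasFDerivAt_snd (hf : HasFDerivAt f f' (t, x)) :
    HasFDerivAt (fun y => f (t, y)) (f'.comp (.inr ℝ ℝ E)) x :=
  hf.comp x (hasFDerivAt_prodMk_right t x)

theorem DifferentiableAt.fderiv_snd_apply (hf : DifferentiableAt ℝ f (t, x)) (v : E) :
    fderiv ℝ (fun y => f (t, y)) x v = fderiv ℝ f (t, x) (0, v) := by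
  rw [hf.hasFDerivAt.hasFDerivAt_snd.fderiv]
  rfl

theorem hasDerivAt_fderiv_snd_apply {φ : ℝ × E → F} (hf : Differentiable ℝ f)
    (hf' : DifferentiableAt ℝ (fderiv ℝ f) (t, x))
    (hφ : ∀ s y, HasDerivAt (fun s => f (s, y)) (φ (s, y)) s) (v : E) :
    HasDerivAt (fun s => fderiv ℝ (fun y => f (s, y)) x v)
      (fderiv ℝ (fun y => φ (t, y)) x v) t := by
  obtain ⟨f'', hf''⟩ : ∃ f'', HasFDerivAt (fderiv ℝ f) f'' (t, x) := ⟨_, hf'.hasFDerivAt⟩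
  have hφ_eq : (fun y => φ (t, y)) = fun y => fderiv ℝ f (t, y) (1, 0) :=
    funext fun y => (hφ t y).unique (hf (t, y)).hasFDerivAt.hasDerivAt_fst
  have hfst : HasDerivAt (fun s => fderiv ℝ f (s, x) (0, v)) (f'' (1, 0) (0, v)) t := by
    simpa using hf''.hasDerivAt_fst.clm_apply (hasDerivAt_const t ((0 : ℝ), v))
  have hsnd : fderiv ℝ (fun y => fderiv ℝ f (t, y) (1, 0)) x v = f'' (0, v) (1, 0) := by
    rw [(hf''.hasFDerivAt_snd.clm_apply (hasFDerivAt_const _ x)).fderiv]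
    simp
  rw [hφ_eq, hsnd, ← second_derivative_symmetric (fun p => (hf p).hasFDerivAt) hf'']
  simpa only [fun s => (hf (s, x)).fderiv_snd_apply v] using hfst

end MixedPartials

theorem stmt9_general
    {𝔄 : Type*} [NormedRing 𝔄] [NormedAlgebra ℝ 𝔄]
    {E : Type*} [NormedAddCommGroup E] [NormedSpace ℝ E]
    (γ g : ℝ × E → 𝔄)
    (hγdiff : ∀ t : ℝ, Differentiable ℝ (fun x : E => γ (t, x)))
    (hg : ContDiff ℝ 2 g)
    (hgunit : ∀ p : ℝ × E, IsUnit (g p))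
    (hgflow : ∀ (t : ℝ) (x : E), HasDerivAt (fun s => g (s, x)) (g (t, x) * γ (t, x)) t)
    (A : E → (E →L[ℝ] 𝔄)) (t : ℝ) (x : E) (v : E) :
    HasDerivAt (fun s : ℝ => gaugeTransform g A s x v)
      (fderiv ℝ (fun y => γ (t, y)) x v
        + (gaugeTransform g A t x v * γ (t, x) - γ (t, x) * gaugeTransform g A t x v))
      t := by
  set Dγ := fderiv ℝ (fun y => γ (t, y)) x v
  set Dg := fun s => fderiv ℝ (fun y => g (s, y)) x v
  have hgd : Differentiable ℝ g := hg.differentiable two_ne_zero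
  have hug : Ring.inverse (g (t, x)) * g (t, x) = 1 := Ring.inverse_mul_cancel _ (hgunit (t, x))
  have hinv : HasDerivAt (fun s => Ring.inverse (g (s, x)))
      (-(γ (t, x) * Ring.inverse (g (t, x)))) t := by
    convert (hgflow t x).ringInverse_of_isUnit (fun s => hgunit (s, x)) using 1
    rw [← mul_assoc, hug, one_mul]
  have hDg : HasDerivAt Dg (g (t, x) * Dγ + Dg t * γ (t, x)) t := by
    have hmixed := hasDerivAt_fderiv_snd_apply (φ := fun p => g p * γ p) hgd
      ((hg.fderiv_right (m := 1) (by norm_num)).differentiable one_ne_zero (t, x)) hgflow v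
    rwa [fderiv_fun_mul' (hgd (t, x)).hasFDerivAt.hasFDerivAt_snd.differentiableAt
      (hγdiff t x)] at hmixed
  have hgauge : (fun s => gaugeTransform g A s x v) =
      fun s => Ring.inverse (g (s, x)) * (A x v * g (s, x) + Dg s) := by
    funext s
    simp only [gaugeTransform, Dg, mul_add, mul_assoc]
  rw [hgauge, congrFun hgauge t]
  refine (hinv.mul (((hgflow t x).const_mul (A x v)).add hDg)).congr_deriv ?_
  simp only [Pi.add_apply]
  nth_rw 2 [← one_mul Dγ]
  rw [← hug]
  noncomm_ring

/-- **Lemma `ELtransverse` (matrix/chart version).**  Let `γ : ℝ × E → 𝔄` be continuous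
and differentiable in the `E`-variable, and let `g : ℝ × E → 𝔄` be `C²` with invertible
values and `∂ₜ g = g·γ` (i.e. `g_t = Pexp(∫₀ᵗ γ_s ds)·g₀`).  Then for every one-form
`A : E → (E →L[ℝ] 𝔄)`, every `(t,x)` and every `v ∈ E`,
`∂ₜ (A^{g_t}(x)v) = (D_x γ_t)(x)v + [A^{g_t}(x)v, γ(t,x)]`, i.e.
`(d/dt) A^{g_t} = d_{A^{g_t}} γ_t`. -/
theorem stmt9
    {𝔄 : Type*} [NormedRing 𝔄] [NormedAlgebra ℝ 𝔄]
    {E : Type*} [NormedAddCommGroup E] [NormedSpace ℝ E]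
    (γ g : ℝ × E → 𝔄)
    (hγcont : Continuous γ)
    (hγdiff : ∀ t : ℝ, Differentiable ℝ (fun x : E => γ (t, x)))
    (hg : ContDiff ℝ 2 g)
    (hgunit : ∀ p : ℝ × E, IsUnit (g p))
    (hgflow : ∀ (t : ℝ) (x : E), HasDerivAt (fun s => g (s, x)) (g (t, x) * γ (t, x)) t)
    (A : E → (E →L[ℝ] 𝔄)) (t : ℝ) (x : E) (v : E) :
    HasDerivAt (fun s : ℝ => gaugeTransform g A s x v)
      (fderiv ℝ (fun y => γ (t, y)) x v
        + (gaugeTransform g A t x v * γ (t, x) - γ (t, x) * gaugeTransform g A t x v))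
      t :=
  stmt9_general γ g hγdiff hg hgunit hgflow A t x v
end

section
/- (Equation 'maurercartanvariation') Let γ : ℝ × E → 𝔄 be continuous and differentiable in the E-variable, and let g : ℝ × E → 𝔄 be twice continuously differentiable with g(t,x) invertible for all (t,x) and ∂_t g(t,x) = g(t,x)·γ(t,x). Then the pulled-back Maurer–Cartan form φ_t(x)v := g(t,x)⁻¹·(D_x g(t,·))(x)v satisfies, for every (t,x) and v ∈ E, that t ↦ φ_t(x)v is differentiable with ∂_t(φ_t(x)v) = (D_x γ(t,·))(x)v + [φ_t(x)v, γ(t,x)]; that is, (d/dt) φ_t = d_{φ_t} γ_t. -/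
/-- The pulled-back Maurer–Cartan form `φ_t(x)v := g(t,x)⁻¹ · (D_x g_t)(x)v` of a
time-dependent group-valued map `g : ℝ × E → 𝔄`. -/
noncomputable def maurerCartan {𝔄 E : Type*} [NormedRing 𝔄] [NormedAlgebra ℝ 𝔄]
    [NormedAddCommGroup E] [NormedSpace ℝ E]
    (g : ℝ × E → 𝔄) (t : ℝ) (x : E) (v : E) : 𝔄 :=
  Ring.inverse (g (t, x)) * (fderiv ℝ (fun y => g (t, y)) x v)

/-! Since `φ_t = g_t⁻¹ · D_x g_t`, the product rule reduces the claim to the time derivatives of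
the two factors. Symmetry of second derivatives gives `∂_t D_x g = D_x ∂_t g = D_x (g γ)
= g · D_x γ + D_x g · γ`, while `∂_t g⁻¹ = -g⁻¹ (g γ) g⁻¹ = -γ g⁻¹`; together
`∂_t φ = -γ φ + D_x γ + φ γ`. As `𝔄` need not be complete, the derivative of inversion along a
curve of units is computed directly from `a⁻¹ - b⁻¹ = a⁻¹ (b - a) b⁻¹`. -/

open Filter Topology
open scoped Ring

section RingInverse

variable {R : Type*} [NormedRing R]

lemma norm_ringInverse_le_two_mul {a b : R} (ha : IsUnit a) (hb : IsUnit b)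
    (hab : ‖b - a‖ * ‖a⁻¹ʳ‖ ≤ 1 / 2) : ‖b⁻¹ʳ‖ ≤ 2 * ‖a⁻¹ʳ‖ := by
  have hdiff : b⁻¹ʳ - a⁻¹ʳ = b⁻¹ʳ * (a - b) * a⁻¹ʳ :=
    Ring.inverse_sub_inverse (iff_of_true hb ha)
  have hbound : ‖b⁻¹ʳ‖ ≤ ‖a⁻¹ʳ‖ + ‖b⁻¹ʳ‖ * (‖b - a‖ * ‖a⁻¹ʳ‖) :=
    calc ‖b⁻¹ʳ‖ = ‖a⁻¹ʳ + b⁻¹ʳ * (a - b) * a⁻¹ʳ‖ := by rw [← hdiff, add_sub_cancel]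
      _ ≤ ‖a⁻¹ʳ‖ + ‖b⁻¹ʳ‖ * ‖a - b‖ * ‖a⁻¹ʳ‖ :=
        (norm_add_le _ _).trans (add_le_add le_rfl (norm_mul₃_le ..))
      _ = _ := by rw [norm_sub_rev, mul_assoc]
  nlinarith [norm_nonneg b⁻¹ʳ, hbound]

lemma continuousWithinAt_ringInverse {a : R} (ha : IsUnit a) :
    ContinuousWithinAt Ring.inverse {x | IsUnit x} a := by
  set M := ‖a⁻¹ʳ‖
  have hsub : Tendsto (fun x => ‖x - a‖) (𝓝[{x | IsUnit x}] a) (𝓝 0) :=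
    tendsto_nhdsWithin_of_tendsto_nhds (tendsto_iff_norm_sub_tendsto_zero.1 tendsto_id)
  have hnear : ∀ᶠ x in 𝓝[{x | IsUnit x}] a, IsUnit x ∧ ‖x - a‖ * M ≤ 1 / 2 := by
    exact eventually_mem_nhdsWithin.and
      ((hsub.mul_const M).eventually (ge_mem_nhds (show 0 * M < 1 / 2 by norm_num)))
  rw [ContinuousWithinAt, tendsto_iff_norm_sub_tendsto_zero]
  refine squeeze_zero' (Eventually.of_forall fun _ => norm_nonneg _) ?_
    (by simpa using hsub.const_mul (2 * M * M))
  filter_upwards [hnear] with x ⟨hx, hxa⟩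
  calc ‖x⁻¹ʳ - a⁻¹ʳ‖ = ‖x⁻¹ʳ * (a - x) * a⁻¹ʳ‖ := by
        rw [Ring.inverse_sub_inverse (iff_of_true hx ha)]
    _ ≤ ‖x⁻¹ʳ‖ * ‖a - x‖ * M := norm_mul₃_le ..
    _ ≤ 2 * M * ‖x - a‖ * M := by
        rw [norm_sub_rev]
        gcongr
        exact norm_ringInverse_le_two_mul ha hx hxa
    _ = 2 * M * M * ‖x - a‖ := by ring

variable {𝕜 : Type*} [NontriviallyNormedField 𝕜] [NormedAlgebra 𝕜 R]

lemma HasDerivAt.ringInverse {c : 𝕜 → R} {c' : R} {t : 𝕜} (hc : HasDerivAt c c' t)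
    (hu : ∀ᶠ s in 𝓝 t, IsUnit (c s)) :
    HasDerivAt (fun s => (c s)⁻¹ʳ) (-((c t)⁻¹ʳ * c' * (c t)⁻¹ʳ)) t := by
  have hinv : Tendsto (fun s => (c s)⁻¹ʳ) (𝓝 t) (𝓝 (c t)⁻¹ʳ) :=
    (continuousWithinAt_ringInverse hu.self_of_nhds).tendsto.comp
      (tendsto_nhdsWithin_iff.2 ⟨hc.continuousAt.tendsto, hu⟩)
  rw [hasDerivAt_iff_tendsto_slope] at hc ⊢
  have hlim := (((hinv.mono_left nhdsWithin_le_nhds).mul hc).mul_const (c t)⁻¹ʳ).neg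
  refine hlim.congr' ?_
  filter_upwards [nhdsWithin_le_nhds hu] with s hs
  rw [slope_def_module, slope_def_module,
    Ring.inverse_sub_inverse (iff_of_true hs hu.self_of_nhds), ← neg_sub (c s), mul_neg, neg_mul,
    smul_neg, mul_smul_comm, smul_mul_assoc]

end RingInverse

section PartialDerivatives

variable {E F : Type*} [NormedAddCommGroup E] [NormedSpace ℝ E]
  [NormedAddCommGroup F] [NormedSpace ℝ F] {g : ℝ × E → F} {t : ℝ} {x : E}

lemma HasFDerivAt.comp_prodMk_left {g' : ℝ × E →L[ℝ] F} (hg : HasFDerivAt g g' (t, x)) :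
    HasDerivAt (fun s => g (s, x)) (g' (1, 0)) t := by
  simpa [Function.comp_def] using
    hg.comp_hasDerivAt t ((hasDerivAt_id t).prodMk (hasDerivAt_const t x))

lemma HasFDerivAt.comp_prodMk_right {g' : ℝ × E →L[ℝ] F} (hg : HasFDerivAt g g' (t, x)) :
    HasFDerivAt (fun y => g (t, y)) (g'.comp (.inr ℝ ℝ E)) x :=
  hg.comp x (hasFDerivAt_prodMk_right t x)

lemma fderiv_comp_prodMk_right_apply (hg : DifferentiableAt ℝ g (t, x)) (v : E) :
    fderiv ℝ (fun y => g (t, y)) x v = fderiv ℝ g (t, x) (0, v) := by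
  rw [hg.hasFDerivAt.comp_prodMk_right.fderiv]
  rfl

lemma deriv_comp_prodMk_left (hg : DifferentiableAt ℝ g (t, x)) :
    deriv (fun s => g (s, x)) t = fderiv ℝ g (t, x) (1, 0) :=
  hg.hasFDerivAt.comp_prodMk_left.deriv

lemma hasDerivAt_fderiv_comp_prodMk_right_apply (hg : ContDiff ℝ 2 g) (t : ℝ) (x v : E) :
    HasDerivAt (fun s => fderiv ℝ (fun y => g (s, y)) x v)
      (fderiv ℝ (fun y => deriv (fun s => g (s, y)) t) x v) t := by
  have hg₁ : Differentiable ℝ g := hg.differentiable (by norm_num)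
  have hg₂ : Differentiable ℝ (fderiv ℝ g) :=
    (hg.fderiv_right (m := 1) (by norm_num)).differentiable (by norm_num)
  have hsymm : fderiv ℝ (fderiv ℝ g) (t, x) (1, 0) (0, v)
      = fderiv ℝ (fderiv ℝ g) (t, x) (0, v) (1, 0) :=
    hg.contDiffAt.isSymmSndFDerivAt (by simp) _ _
  have hx : HasFDerivAt (fun y => fderiv ℝ g (t, y) (1, 0))
      (((fderiv ℝ (fderiv ℝ g) (t, x)).comp (.inr ℝ ℝ E)).flip (1, 0)) x := by
    simpa using (hg₂ _).hasFDerivAt.comp_prodMk_right.clm_apply (hasFDerivAt_const (1, 0) x)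
  simp_rw [fderiv_comp_prodMk_right_apply (hg₁ _), deriv_comp_prodMk_left (hg₁ _), hx.fderiv]
  simpa [← hsymm] using
    (hg₂ (t, x)).hasFDerivAt.comp_prodMk_left.clm_apply (hasDerivAt_const t (0, v))

end PartialDerivatives

theorem stmt10_general
    {𝔄 : Type*} [NormedRing 𝔄] [NormedAlgebra ℝ 𝔄]
    {E : Type*} [NormedAddCommGroup E] [NormedSpace ℝ E]
    (γ g : ℝ × E → 𝔄)
    (hγdiff : ∀ t : ℝ, Differentiable ℝ (fun x : E => γ (t, x)))
    (hg : ContDiff ℝ 2 g)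
    (hgunit : ∀ p : ℝ × E, IsUnit (g p))
    (hgflow : ∀ (t : ℝ) (x : E), HasDerivAt (fun s => g (s, x)) (g (t, x) * γ (t, x)) t)
    (t : ℝ) (x : E) (v : E) :
    HasDerivAt (fun s : ℝ => maurerCartan g s x v)
      (fderiv ℝ (fun y => γ (t, y)) x v
        + (maurerCartan g t x v * γ (t, x) - γ (t, x) * maurerCartan g t x v))
      t := by
  have hflow : (fun y => deriv (fun s => g (s, y)) t) = fun y => g (t, y) * γ (t, y) :=
    funext fun y => (hgflow t y).deriv
  have hslice : DifferentiableAt ℝ (fun y => g (t, y)) x :=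
    ((hg.differentiable (by norm_num) _).hasFDerivAt.comp_prodMk_right).differentiableAt
  have hvar : HasDerivAt (fun s => fderiv ℝ (fun y => g (s, y)) x v)
      (g (t, x) * fderiv ℝ (fun y => γ (t, y)) x v
        + fderiv ℝ (fun y => g (t, y)) x v * γ (t, x)) t := by
    have := hasDerivAt_fderiv_comp_prodMk_right_apply hg t x v
    rwa [hflow, fderiv_fun_mul' hslice (hγdiff t x)] at this
  have hinv : HasDerivAt (fun s => (g (s, x))⁻¹ʳ)
      (-((g (t, x))⁻¹ʳ * (g (t, x) * γ (t, x)) * (g (t, x))⁻¹ʳ)) t :=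
    (hgflow t x).ringInverse (.of_forall fun s => hgunit (s, x))
  refine (hinv.mul hvar).congr_deriv ?_
  have hinv_mul : (g (t, x))⁻¹ʳ * g (t, x) = 1 := Ring.inverse_mul_cancel _ (hgunit (t, x))
  simp only [maurerCartan, neg_mul, mul_add, ← mul_assoc, hinv_mul, one_mul]
  abel

/-- **Equation `maurercartanvariation`.**  Let `γ : ℝ × E → 𝔄` be continuous and
differentiable in the `E`-variable, and let `g : ℝ × E → 𝔄` be `C²` with invertible
values and `∂ₜ g = g·γ` (i.e. `g_t = Pexp(∫₀ᵗ γ_s ds)·g₀`).  Then the pulled-back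
Maurer–Cartan form `φ_t(x)v := g(t,x)⁻¹ (D_x g_t)(x)v` satisfies
`∂ₜ (φ_t(x)v) = (D_x γ_t)(x)v + [φ_t(x)v, γ(t,x)]`, i.e. `(d/dt) φ_t = d_{φ_t} γ_t`. -/
theorem stmt10
    {𝔄 : Type*} [NormedRing 𝔄] [NormedAlgebra ℝ 𝔄]
    {E : Type*} [NormedAddCommGroup E] [NormedSpace ℝ E]
    (γ g : ℝ × E → 𝔄)
    (hγcont : Continuous γ)
    (hγdiff : ∀ t : ℝ, Differentiable ℝ (fun x : E => γ (t, x)))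
    (hg : ContDiff ℝ 2 g)
    (hgunit : ∀ p : ℝ × E, IsUnit (g p))
    (hgflow : ∀ (t : ℝ) (x : E), HasDerivAt (fun s => g (s, x)) (g (t, x) * γ (t, x)) t)
    (t : ℝ) (x : E) (v : E) :
    HasDerivAt (fun s : ℝ => maurerCartan g s x v)
      (fderiv ℝ (fun y => γ (t, y)) x v
        + (maurerCartan g t x v * γ (t, x) - γ (t, x) * maurerCartan g t x v))
      t :=
  stmt10_general γ g hγdiff hg hgunit hgflow t x v
end

section
/- (Proposition 'semidirectPexp', matrix/chart version) Let γ, β : ℝ × E → 𝔄 be continuous and differentiable in the E-variable, let g : ℝ × E → 𝔄 be twice continuously differentiable with g(t,x) invertible for all (t,x) and ∂_t g(t,x) = g(t,x)·γ(t,x), and let τ : ℝ × E → 𝔄 be twice continuously differentiable with ∂_t τ(t,x) = β(t,x) − [γ(t,x), τ(t,x)] (the path τ_t = g_t⁻¹(∫₀ᵗ g_{t'} β_{t'} g_{t'}⁻¹ dt')g_t in the dual of the Lie algebra). Let A, B : E → (E →L[ℝ] 𝔄) be one-forms, set A(t) := A^{g_t} and B(t)(x)v := g(t,x)⁻¹·(B(x)v)·g(t,x)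 + (D_x τ(t,·))(x)v + [A(t)(x)v, τ(t,x)] (i.e. B(t) = g_t⁻¹ B g_t + d_{A(t)} τ_t). Then for every (t,x) and v ∈ E: ∂_t(B(t)(x)v) = −[γ(t,x), B(t)(x)v] + (D_x β(t,·))(x)v + [A(t)(x)v, β(t,x)]; that is, Ḃ(t) = −[γ_t, B(t)] + d_{A(t)} β_t. -/
/-!
Differentiate `B(t)` term by term. From `∂ₜ g = g γ` one gets `∂ₜ g⁻¹ = -γ g⁻¹`, so every
conjugate `g_t⁻¹ X g_t` evolves by `[·, γ]`. Mixed partials of the `C²` maps `g` and `τ`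
commute, so `∂ₜ D_x g = D_x (g γ)` and `∂ₜ D_x τ = D_x (β - [γ, τ])`; in particular
`∂ₜ A(t) = d_{A(t)} γ`. Summing, the terms `[D_x γ, τ]` cancel and the Jacobi identity turns
`[[A(t), γ], τ] - [A(t), [γ, τ]]` into `-[γ, [A(t), τ]]`.
-/

/-- The gauge transform `A^{g_t}(x)v = g⁻¹ (A(x)v) g + g⁻¹ (D_x g_t)(x)v` of a
`𝔤`-valued one-form `A` on a chart `E` by a time-dependent group-valued map `g`. -/
noncomputable def gaugeA {𝔄 E : Type*} [NormedRing 𝔄] [NormedAlgebra ℝ 𝔄]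
    [NormedAddCommGroup E] [NormedSpace ℝ E]
    (g : ℝ × E → 𝔄) (A : E → (E →L[ℝ] 𝔄)) (t : ℝ) (x : E) (v : E) : 𝔄 :=
  Ring.inverse (g (t, x)) * (A x v) * g (t, x)
    + Ring.inverse (g (t, x)) * (fderiv ℝ (fun y => g (t, y)) x v)

/-- The transformed `B`-field
`B(t) = g_t⁻¹ B g_t + d_{A^{g_t}} τ_t`, i.e.
`B(t)(x)v = g⁻¹ (B(x)v) g + (D_x τ_t)(x)v + [A^{g_t}(x)v, τ(t,x)]`. -/
noncomputable def gaugeB {𝔄 E : Type*} [NormedRing 𝔄] [NormedAlgebra ℝ 𝔄]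
    [NormedAddCommGroup E] [NormedSpace ℝ E]
    (g τ : ℝ × E → 𝔄) (A B : E → (E →L[ℝ] 𝔄)) (t : ℝ) (x : E) (v : E) : 𝔄 :=
  Ring.inverse (g (t, x)) * (B x v) * g (t, x)
    + fderiv ℝ (fun y => τ (t, y)) x v
    + (gaugeA g A t x v * τ (t, x) - τ (t, x) * gaugeA g A t x v)

open Filter Topology
open scoped Ring

section NormedRing

variable {R : Type*} [NormedRing R]

theorem Ring.norm_inverse_sub_inverse_le {x y : R} (hx : IsUnit x) (hy : IsUnit y)
    (hxy : ‖y - x‖ * ‖x⁻¹ʳ‖ ≤ 1 / 2) :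
    ‖y⁻¹ʳ - x⁻¹ʳ‖ ≤ 2 * ‖x⁻¹ʳ‖ ^ 2 * ‖y - x‖ := by
  have hdiff : ‖y⁻¹ʳ - x⁻¹ʳ‖ ≤ ‖y⁻¹ʳ‖ * ‖y - x‖ * ‖x⁻¹ʳ‖ := by
    rw [Ring.inverse_sub_inverse (iff_of_true hy hx), ← norm_neg (y - x), neg_sub]
    exact norm_mul₃_le
  have hy_le : ‖y⁻¹ʳ‖ ≤ 2 * ‖x⁻¹ʳ‖ := by
    nlinarith [norm_sub_norm_le y⁻¹ʳ x⁻¹ʳ, mul_le_mul_of_nonneg_left hxy (norm_nonneg y⁻¹ʳ)]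
  calc ‖y⁻¹ʳ - x⁻¹ʳ‖ ≤ ‖y⁻¹ʳ‖ * ‖y - x‖ * ‖x⁻¹ʳ‖ := hdiff
    _ ≤ 2 * ‖x⁻¹ʳ‖ * ‖y - x‖ * ‖x⁻¹ʳ‖ := by gcongr
    _ = 2 * ‖x⁻¹ʳ‖ ^ 2 * ‖y - x‖ := by ring

-- `NormedRing.inverse_continuousAt` needs completeness, which is not needed within the units.
theorem Ring.continuousWithinAt_inverse {x : R} (hx : IsUnit x) :
    ContinuousWithinAt Ring.inverse {y | IsUnit y} x := by
  have hsmall : Tendsto (fun y => ‖y - x‖) (𝓝[{y | IsUnit y}] x) (𝓝 0) :=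
    tendsto_iff_norm_sub_tendsto_zero.mp (tendsto_nhdsWithin_of_tendsto_nhds tendsto_id)
  have hclose : ∀ᶠ y in 𝓝[{y | IsUnit y}] x, ‖y - x‖ * ‖x⁻¹ʳ‖ ≤ 1 / 2 := by
    have := hsmall.mul_const ‖x⁻¹ʳ‖
    rw [zero_mul] at this
    exact this.eventually (ge_mem_nhds (by norm_num))
  rw [ContinuousWithinAt, tendsto_iff_norm_sub_tendsto_zero]
  refine squeeze_zero' (g := fun y => 2 * ‖x⁻¹ʳ‖ ^ 2 * ‖y - x‖)
    (Eventually.of_forall fun _ => norm_nonneg _) ?_ ?_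
  · filter_upwards [hclose, self_mem_nhdsWithin] with y hy hunit
    exact Ring.norm_inverse_sub_inverse_le hx hunit hy
  · simpa using hsmall.const_mul (2 * ‖x⁻¹ʳ‖ ^ 2)

variable {𝕜 : Type*} [NontriviallyNormedField 𝕜] [NormedAlgebra 𝕜 R]

theorem HasDerivAt.ring_inverse {f : 𝕜 → R} {f' : R} {t : 𝕜} (hf : HasDerivAt f f' t)
    (hunit : ∀ s, IsUnit (f s)) :
    HasDerivAt (fun s => (f s)⁻¹ʳ) (-((f t)⁻¹ʳ * f' * (f t)⁻¹ʳ)) t := by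
  have hcont : ContinuousAt (fun s => (f s)⁻¹ʳ) t :=
    continuousWithinAt_univ _ _ |>.mp <| (Ring.continuousWithinAt_inverse (hunit t)).comp
      hf.continuousAt.continuousWithinAt fun s _ => hunit s
  have hslope : ∀ s, slope (fun s => (f s)⁻¹ʳ) t s
      = -((f s)⁻¹ʳ * slope f t s * (f t)⁻¹ʳ) := by
    intro s
    rw [slope_def_module, slope_def_module,
      Ring.inverse_sub_inverse (iff_of_true (hunit s) (hunit t)), ← neg_sub (f s), mul_neg,
      neg_mul, smul_neg, mul_smul_comm, smul_mul_assoc]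
  rw [hasDerivAt_iff_tendsto_slope] at hf ⊢
  rw [funext hslope]
  exact (((hcont.tendsto.mono_left nhdsWithin_le_nhds).mul hf).mul tendsto_const_nhds).neg

theorem HasDerivAt.ring_inverse_of_deriv_eq_mul {c : 𝕜 → R} {a : R} {t : 𝕜}
    (hc : HasDerivAt c (c t * a) t) (hunit : ∀ s, IsUnit (c s)) :
    HasDerivAt (fun s => (c s)⁻¹ʳ) (-(a * (c t)⁻¹ʳ)) t := by
  convert hc.ring_inverse hunit using 2
  rw [← mul_assoc, Ring.inverse_mul_cancel _ (hunit t), one_mul]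

theorem HasDerivAt.ring_inverse_mul_mul_self_of_deriv_eq_mul {c : 𝕜 → R} {a : R} {t : 𝕜}
    (X : R) (hc : HasDerivAt c (c t * a) t) (hunit : ∀ s, IsUnit (c s)) :
    HasDerivAt (fun s => (c s)⁻¹ʳ * X * c s)
      ((c t)⁻¹ʳ * X * c t * a - a * ((c t)⁻¹ʳ * X * c t)) t :=
  (((hc.ring_inverse_of_deriv_eq_mul hunit).mul_const X).mul hc).congr_deriv (by noncomm_ring)

end NormedRing

section Slices

variable {E F : Type*} [NormedAddCommGroup E] [NormedSpace ℝ E]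
  [NormedAddCommGroup F] [NormedSpace ℝ F]

theorem hasDerivAt_fderiv_slice_of_contDiff {f h : ℝ × E → F} (hf : ContDiff ℝ 2 f)
    (hflow : ∀ t x, HasDerivAt (fun s => f (s, x)) (h (t, x)) t) (t : ℝ) (x v : E) :
    HasDerivAt (fun s => fderiv ℝ (fun y => f (s, y)) x v)
      (fderiv ℝ (fun y => h (t, y)) x v) t := by
  have hdiff : Differentiable ℝ f := hf.differentiable (by norm_num)
  have hD : Differentiable ℝ (fderiv ℝ f) :=
    (hf.fderiv_right (m := 1) (by norm_num)).differentiable (by norm_num)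
  have hD2 := (hD (t, x)).hasFDerivAt
  have hslice : ∀ s, fderiv ℝ (fun y => f (s, y)) x v = fderiv ℝ f (s, x) (0, v) := fun s => by
    have hpartial : HasFDerivAt (fun y => f (s, y)) ((fderiv ℝ f (s, x)).comp (.inr ℝ ℝ E)) x :=
      (hdiff (s, x)).hasFDerivAt.comp x (hasFDerivAt_prodMk_right s x)
    rw [hpartial.fderiv]
    rfl
  have htime_partial : ∀ y, h (t, y) = fderiv ℝ f (t, y) (1, 0) := fun y =>
    (hflow t y).unique
      ((hdiff (t, y)).hasFDerivAt.comp_hasDerivAt t (hasFDerivAt_prodMk_left t y).hasDerivAt)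
  have htime : HasDerivAt (fun s => fderiv ℝ f (s, x) (0, v))
      (fderiv ℝ (fderiv ℝ f) (t, x) (1, 0) (0, v)) t := by
    have hcurve := hD2.comp_hasDerivAt t (hasFDerivAt_prodMk_left t x).hasDerivAt
    exact (hcurve.clm_apply (hasDerivAt_const t ((0 : ℝ), v))).congr_deriv (by simp)
  have hspace :
      fderiv ℝ (fun y => h (t, y)) x v = fderiv ℝ (fderiv ℝ f) (t, x) (0, v) (1, 0) := by
    have hpartial : HasFDerivAt (fun y => fderiv ℝ f (t, y) (1, 0))
        (((fderiv ℝ (fderiv ℝ f) (t, x)).comp (.inr ℝ ℝ E)).flip (1, 0)) x := by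
      simpa using (hD2.comp x (hasFDerivAt_prodMk_right t x)).clm_apply
        (hasFDerivAt_const ((1 : ℝ), (0 : E)) x)
    rw [funext htime_partial, hpartial.fderiv]
    rfl
  rw [hspace, ← hf.contDiffAt.isSymmSndFDerivAt (by simp), funext hslice]
  exact htime

end Slices

section Gauge

variable {𝔄 E : Type*} [NormedRing 𝔄] [NormedAlgebra ℝ 𝔄] [NormedAddCommGroup E]
  [NormedSpace ℝ E]

theorem hasDerivAt_gaugeA {γ g : ℝ × E → 𝔄} {t : ℝ} {x : E}
    (hγ : DifferentiableAt ℝ (fun y => γ (t, y)) x) (hg : ContDiff ℝ 2 g)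
    (hgunit : ∀ p, IsUnit (g p))
    (hgflow : ∀ t x, HasDerivAt (fun s => g (s, x)) (g (t, x) * γ (t, x)) t)
    (A : E → E →L[ℝ] 𝔄) (v : E) :
    HasDerivAt (fun s => gaugeA g A s x v)
      (fderiv ℝ (fun y => γ (t, y)) x v
        + (gaugeA g A t x v * γ (t, x) - γ (t, x) * gaugeA g A t x v)) t := by
  have hgx : DifferentiableAt ℝ (fun y => g (t, y)) x :=
    (hg.differentiable (by norm_num)).differentiableAt.comp x
      (differentiableAt_const t |>.prodMk differentiableAt_id)
  have hDg : HasDerivAt (fun s => fderiv ℝ (fun y => g (s, y)) x v)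
      (g (t, x) * fderiv ℝ (fun y => γ (t, y)) x v
        + fderiv ℝ (fun y => g (t, y)) x v * γ (t, x)) t := by
    have hslice :=
      hasDerivAt_fderiv_slice_of_contDiff (h := fun p => g p * γ p) hg hgflow t x v
    have hprod : HasFDerivAt (fun y => g (t, y) * γ (t, y)) _ x :=
      hgx.hasFDerivAt.mul' hγ.hasFDerivAt
    rw [hprod.fderiv] at hslice
    simpa using hslice
  have hconj := (hgflow t x).ring_inverse_mul_mul_self_of_deriv_eq_mul (A x v)
    fun s => hgunit (s, x)
  have hinv := (hgflow t x).ring_inverse_of_deriv_eq_mul fun s => hgunit (s, x)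
  refine (hconj.add (hinv.mul hDg)).congr_deriv ?_
  rw [gaugeA, mul_add, Ring.inverse_mul_cancel_left _ _ (hgunit (t, x))]
  noncomm_ring

end Gauge

theorem stmt11_general
    {𝔄 : Type*} [NormedRing 𝔄] [NormedAlgebra ℝ 𝔄]
    {E : Type*} [NormedAddCommGroup E] [NormedSpace ℝ E]
    (γ β g τ : ℝ × E → 𝔄)
    (hγdiff : ∀ t : ℝ, Differentiable ℝ (fun x : E => γ (t, x)))
    (hβdiff : ∀ t : ℝ, Differentiable ℝ (fun x : E => β (t, x)))
    (hg : ContDiff ℝ 2 g)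
    (hgunit : ∀ p : ℝ × E, IsUnit (g p))
    (hgflow : ∀ (t : ℝ) (x : E), HasDerivAt (fun s => g (s, x)) (g (t, x) * γ (t, x)) t)
    (hτ : ContDiff ℝ 2 τ)
    (hτflow : ∀ (t : ℝ) (x : E), HasDerivAt (fun s => τ (s, x))
      (β (t, x) - (γ (t, x) * τ (t, x) - τ (t, x) * γ (t, x))) t)
    (A B : E → (E →L[ℝ] 𝔄)) (t : ℝ) (x : E) (v : E) :
    HasDerivAt (fun s : ℝ => gaugeB g τ A B s x v)
      (-(γ (t, x) * gaugeB g τ A B t x v - gaugeB g τ A B t x v * γ (t, x))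
        + fderiv ℝ (fun y => β (t, y)) x v
        + (gaugeA g A t x v * β (t, x) - β (t, x) * gaugeA g A t x v))
      t := by
  have hτdiff : ∀ s, Differentiable ℝ (fun y => τ (s, y)) := fun s =>
    (hτ.differentiable (by norm_num)).comp (differentiable_const s |>.prodMk differentiable_id)
  have hconj := (hgflow t x).ring_inverse_mul_mul_self_of_deriv_eq_mul (B x v)
    fun s => hgunit (s, x)
  have hDτ : HasDerivAt (fun s => fderiv ℝ (fun y => τ (s, y)) x v)
      (fderiv ℝ (fun y => β (t, y)) x v
        - (γ (t, x) * fderiv ℝ (fun y => τ (t, y)) x v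
            + fderiv ℝ (fun y => γ (t, y)) x v * τ (t, x)
          - (τ (t, x) * fderiv ℝ (fun y => γ (t, y)) x v
            + fderiv ℝ (fun y => τ (t, y)) x v * γ (t, x)))) t := by
    have hslice := hasDerivAt_fderiv_slice_of_contDiff
      (h := fun p => β p - (γ p * τ p - τ p * γ p)) hτ hτflow t x v
    have hγx := (hγdiff t x).hasFDerivAt
    have hτx := (hτdiff t x).hasFDerivAt
    have hrhs :
        HasFDerivAt (fun y => β (t, y) - (γ (t, y) * τ (t, y) - τ (t, y) * γ (t, y))) _ x :=
      (hβdiff t x).hasFDerivAt.sub ((hγx.mul' hτx).sub (hτx.mul' hγx))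
    rw [hrhs.fderiv] at hslice
    simpa using hslice
  have hA := hasDerivAt_gaugeA (hγdiff t x) hg hgunit hgflow A v
  have hτt := hτflow t x
  refine ((hconj.add hDτ).add ((hA.mul hτt).sub (hτt.mul hA))).congr_deriv ?_
  rw [gaugeB]
  noncomm_ring

/-- **Proposition `semidirectPexp` (matrix/chart version).**  Let `γ, β : ℝ × E → 𝔄` be
continuous and differentiable in the `E`-variable, let `g` be `C²` with invertible values
and `∂ₜ g = g·γ`, and let `τ` be `C²` with `∂ₜ τ = β - [γ, τ]` (the path
`τ_t = g_t⁻¹(∫₀ᵗ g_{t'} β_{t'} g_{t'}⁻¹ dt') g_t`).  With `A(t) := A^{g_t}` and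
`B(t) := g_t⁻¹ B g_t + d_{A(t)} τ_t`, one has
`Ḃ(t) = -[γ_t, B(t)] + d_{A(t)} β_t`, pointwise:
`∂ₜ(B(t)(x)v) = -[γ(t,x), B(t)(x)v] + (D_x β_t)(x)v + [A(t)(x)v, β(t,x)]`. -/
theorem stmt11
    {𝔄 : Type*} [NormedRing 𝔄] [NormedAlgebra ℝ 𝔄]
    {E : Type*} [NormedAddCommGroup E] [NormedSpace ℝ E]
    (γ β g τ : ℝ × E → 𝔄)
    (hγcont : Continuous γ)
    (hγdiff : ∀ t : ℝ, Differentiable ℝ (fun x : E => γ (t, x)))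
    (hβcont : Continuous β)
    (hβdiff : ∀ t : ℝ, Differentiable ℝ (fun x : E => β (t, x)))
    (hg : ContDiff ℝ 2 g)
    (hgunit : ∀ p : ℝ × E, IsUnit (g p))
    (hgflow : ∀ (t : ℝ) (x : E), HasDerivAt (fun s => g (s, x)) (g (t, x) * γ (t, x)) t)
    (hτ : ContDiff ℝ 2 τ)
    (hτflow : ∀ (t : ℝ) (x : E), HasDerivAt (fun s => τ (s, x))
      (β (t, x) - (γ (t, x) * τ (t, x) - τ (t, x) * γ (t, x))) t)
    (A B : E → (E →L[ℝ] 𝔄)) (t : ℝ) (x : E) (v : E) :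
    HasDerivAt (fun s : ℝ => gaugeB g τ A B s x v)
      (-(γ (t, x) * gaugeB g τ A B t x v - gaugeB g τ A B t x v * γ (t, x))
        + fderiv ℝ (fun y => β (t, y)) x v
        + (gaugeA g A t x v * β (t, x) - β (t, x) * gaugeA g A t x v))
      t :=
  stmt11_general γ β g τ hγdiff hβdiff hg hgunit hgflow hτ hτflow A B t x v
end
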